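/- arXiv:1004.3623 — 4 statements merged into one kernel-verified Lean document; each statement's English description precedes it below -/
import Mathlib

section
/- For every real number β > 0, sinh(β)·(1 + cosh(β)) < cosh(β)^3. -/
/-!
Write `c = cosh β`, `s = sinh β`, so `s² = c² - 1` and `c ≥ 1`. Then
`c⁶ - s²(1 + c)² = (c s² - 1)² + c² s² ≥ (c s² - 1)² + c s² = (c s² - 1/2)² + 3/4 > 0`,
so `|s (1 + c)| < c³`.
-/

theorem mul_one_add_lt_pow_three_of_sq_sub_sq_eq_one {c s : ℝ} (hc : 1 ≤ c)
    (h : c ^ 2 - s ^ 2 = 1) : s * (1 + c) < c ^ 3 := by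
  have key : (c ^ 3) ^ 2 - (s * (1 + c)) ^ 2 = (c * s ^ 2 - 1) ^ 2 + c ^ 2 * s ^ 2 := by
    linear_combination (c ^ 4 + c ^ 2 + 1 + c ^ 2 * s ^ 2) * h
  have hx : c * s ^ 2 ≤ c ^ 2 * s ^ 2 :=
    mul_le_mul_of_nonneg_right (by nlinarith) (sq_nonneg s)
  have hsq : (s * (1 + c)) ^ 2 < (c ^ 3) ^ 2 := by
    nlinarith [sq_nonneg (c * s ^ 2 - 1 / 2)]
  exact lt_of_pow_lt_pow_left₀ 2 (by positivity) hsq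

theorem stmt_2_general (β : ℝ) :
    Real.sinh β * (1 + Real.cosh β) < Real.cosh β ^ 3 :=
  mul_one_add_lt_pow_three_of_sq_sub_sq_eq_one (Real.one_le_cosh β) (Real.cosh_sq_sub_sinh_sq β)

theorem stmt_2 (β : ℝ) (hβ : 0 < β) :
    Real.sinh β * (1 + Real.cosh β) < Real.cosh β ^ 3 :=
  stmt_2_general β
end

section
/- Fix β > 0. Then the only pair (x,y) ∈ ℝ≥0 × ℝ≥0 with x > y satisfying x²·cosh(β)^4 + y²·sinh(β)²·cosh(β) = x and x·y·sinh(β)·cosh(β)·(1+cosh(β)) = y is (x,y) = (1/cosh(β)^4, 0). -/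
theorem stmt_3 (β : ℝ) (hβ : 0 < β) (x y : ℝ) (hy : 0 ≤ y) (hxy : y < x)
    (h1 : x ^ 2 * Real.cosh β ^ 4 + y ^ 2 * Real.sinh β ^ 2 * Real.cosh β = x)
    (h2 : x * y * (Real.sinh β * Real.cosh β * (1 + Real.cosh β)) = y) :
    x = 1 / Real.cosh β ^ 4 ∧ y = 0 := by
  set c := Real.cosh β with hc
  set s := Real.sinh β with hs
  have hs0 : 0 < s := Real.sinh_pos_iff.mpr hβ
  have hc1 : 1 < c := by
    have := Real.one_lt_cosh.mpr (ne_of_gt hβ)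
    simpa [hc] using this
  have hc0 : 0 < c := by linarith
  have hsc : s ^ 2 = c ^ 2 - 1 := by
    have := Real.cosh_sq_sub_sinh_sq β
    rw [← hc, ← hs] at this
    linarith
  rcases eq_or_lt_of_le hy with h0 | h0
  · -- y = 0
    have hy0 : y = 0 := h0.symm
    subst hy0
    have hx0 : 0 < x := hxy
    have hx : x = 1 / c ^ 4 := by
      have hc4 : (0:ℝ) < c ^ 4 := by positivity
      field_simp
      nlinarith [h1]
    exact ⟨hx, rfl⟩
  · exfalso
    have hx0 : 0 < x := lt_trans h0 hxy
    -- from h2: x * s * c * (1 + c) = 1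
    have key : x * (s * c * (1 + c)) = 1 := by
      have hne : y ≠ 0 := ne_of_gt h0
      ring_nf at h2 ⊢
      nlinarith [mul_left_cancel₀ hne (by linarith [h2] : y * (x * (s * c * (1 + c))) = y * 1)]
    -- from h1: x * c^4 < 1
    have hlt : x * c ^ 4 < 1 := by
      have hpos : 0 < y ^ 2 * s ^ 2 * c := by positivity
      nlinarith [h1, hx0]
    -- s * (1 + c) < c ^ 3
    have hkey2 : s * (1 + c) < c ^ 3 := by
      nlinarith [sq_nonneg (c - 1), sq_nonneg (c ^ 2 - c - 1), sq_nonneg s, mul_pos hs0 hc0, sq_nonneg (c*s - c), sq_nonneg (s - c)]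
    have : x * (s * c * (1 + c)) < x * c ^ 4 := by
      have : s * c * (1 + c) < c ^ 4 := by nlinarith [hkey2, hc0]
      exact mul_lt_mul_of_pos_left this hx0
    linarith
end

section
/- Fix β > 0. Suppose x⁰,…,x^{k-1} and y⁰,…,y^{k-1} are sequences of positive reals (indices mod k, k ≥ 2) satisfying (x^{i+1})²·cosh(β)^4 + (y^{i+1})²·sinh(β)²·cosh(β) = x^i and x^{i+1}·y^{i+1}·sinh(β)·cosh(β)·(1+cosh(β)) = y^i for all i (with x^k = x^0, y^k = y^0). Then this leads to a contradiction; i.e., no such periodic orbit with all y^i > 0 exists. -/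
/-!
Write `c = cosh β`, `s = sinh β` and `uᵢ = c⁴ xᵢ`. Since `yᵢ > 0`, the first equation gives
`u_{i+1}² < uᵢ`, so the product `P` of the `uᵢ` over one period satisfies `P² < P`, i.e. `P < 1`.
The second equation reads `yᵢ = u_{i+1} q y_{i+1}` with `q = s (1 + c) / c³ < 1`; multiplying it
over one period gives `P qᵏ = 1`, which is impossible.
-/

open Finset Real

theorem Finset.prod_range_succ_eq_prod_range_of_periodic {M : Type*} [CommMonoid M]
    (f : ℕ → M) {k : ℕ} (hper : f k = f 0) :
    ∏ i ∈ range k, f (i + 1) = ∏ i ∈ range k, f i := by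
  cases k with
  | zero => simp
  | succ n => rw [prod_range_succ' f, prod_range_succ, hper]

theorem prod_range_lt_one_of_sq_lt_of_periodic {R : Type*} [CommRing R] [LinearOrder R]
    [IsStrictOrderedRing R] {u : ℕ → R} {k : ℕ} (hk : k ≠ 0)
    (hpos : ∀ i < k, 0 < u (i + 1)) (hper : u k = u 0) (hsq : ∀ i < k, u (i + 1) ^ 2 < u i) :
    ∏ i ∈ range k, u (i + 1) < 1 := by
  have hP : (∏ i ∈ range k, u (i + 1)) ^ 2 < ∏ i ∈ range k, u (i + 1) := by
    rw [← prod_pow, prod_range_succ_eq_prod_range_of_periodic u hper]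
    exact prod_lt_prod_of_nonempty (fun i hi => pow_pos (hpos i (mem_range.1 hi)) 2)
      (fun i hi => hsq i (mem_range.1 hi)) (nonempty_range_iff.2 hk)
  nlinarith [sq_nonneg (∏ i ∈ range k, u (i + 1))]

theorem prod_range_eq_one_of_periodic_of_eq_mul {M : Type*} [CommMonoidWithZero M]
    [IsCancelMulZero M] [Nontrivial M]
    {y a : ℕ → M} {k : ℕ} (hy : ∀ i < k, y i ≠ 0) (hper : y k = y 0)
    (h : ∀ i < k, y i = a i * y (i + 1)) :
    ∏ i ∈ range k, a i = 1 := by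
  have hprod : (∏ i ∈ range k, a i) * ∏ i ∈ range k, y i = ∏ i ∈ range k, y i := by
    rw [← prod_range_succ_eq_prod_range_of_periodic y hper, ← prod_mul_distrib,
      prod_range_succ_eq_prod_range_of_periodic y hper]
    exact (prod_congr rfl fun i hi => h i (mem_range.1 hi)).symm
  exact (mul_eq_right₀ (prod_ne_zero_iff.2 fun i hi => hy i (mem_range.1 hi))).1 hprod

theorem Real.sinh_mul_one_add_cosh_lt_cosh_pow_three (β : ℝ) :
    sinh β * (1 + cosh β) < cosh β ^ 3 := by
  have hc := one_le_cosh β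
  have hsq : (sinh β * (1 + cosh β)) ^ 2 < (cosh β ^ 3) ^ 2 := by
    rw [mul_pow, sinh_sq]
    -- `c⁶ - (c² - 1)(1 + c)² = (c³ - c - 1)² + c²(c² - 1)`
    nlinarith [sq_nonneg (cosh β ^ 3 - cosh β - 1),
      mul_nonneg (sq_nonneg (cosh β)) (by nlinarith : (0 : ℝ) ≤ cosh β ^ 2 - 1)]
  exact (le_abs_self _).trans_lt (abs_lt_of_sq_lt_sq hsq (by positivity))

theorem stmt_5 (β : ℝ) (hβ : 0 < β) (k : ℕ) (hk : 2 ≤ k) (x y : ℕ → ℝ)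
    (hx : ∀ i ≤ k, 0 < x i) (hy : ∀ i ≤ k, 0 < y i)
    (hper_x : x k = x 0) (hper_y : y k = y 0)
    (h1 : ∀ i < k, (x (i+1)) ^ 2 * Real.cosh β ^ 4
        + (y (i+1)) ^ 2 * Real.sinh β ^ 2 * Real.cosh β = x i)
    (h2 : ∀ i < k, x (i+1) * y (i+1) * (Real.sinh β * Real.cosh β * (1 + Real.cosh β)) = y i) :
    False := by
  have hc : 0 < cosh β := cosh_pos β
  have hs : 0 < sinh β := sinh_pos_iff.2 hβ
  set u : ℕ → ℝ := fun i => cosh β ^ 4 * x i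
  set q := sinh β * (1 + cosh β) / cosh β ^ 3
  have hu_pos : ∀ i < k, 0 < u (i + 1) := fun i hi => by
    have := hx (i + 1) hi
    positivity
  have hu : ∏ i ∈ range k, u (i + 1) < 1 := by
    refine prod_range_lt_one_of_sq_lt_of_periodic (by omega) hu_pos (by simp [u, hper_x])
      fun i hi => ?_
    have := hy (i + 1) hi
    have hgap : 0 < cosh β ^ 4 * (y (i + 1) ^ 2 * sinh β ^ 2 * cosh β) := by positivity
    simp only [u, ← h1 i hi]
    linarith
  have hq : q < 1 := (div_lt_one (by positivity)).2 (sinh_mul_one_add_cosh_lt_cosh_pow_three β)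
  have hprod : ∏ i ∈ range k, (u (i + 1) * q) = 1 := by
    refine prod_range_eq_one_of_periodic_of_eq_mul (fun i hi => (hy i hi.le).ne') hper_y
      fun i hi => ?_
    simp only [u, q, ← h2 i hi]
    field_simp
  rw [prod_mul_distrib, prod_const, card_range] at hprod
  have hP : 0 ≤ ∏ i ∈ range k, u (i + 1) := prod_nonneg fun i hi => (hu_pos i (mem_range.1 hi)).le
  exact (mul_lt_one_of_nonneg_of_lt_one_left hP hu (pow_le_one₀ (by positivity) hq.le)).ne hprod
end

section
/- Fix β > 0 and positive reals x, y with x ≥ 2y·sqrt(cosh(β)³/(1+cosh(β))²). With x', y' defined by x' = sqrt((x + D)/(2·cosh(β)^4)) and y' = sqrt((x - D)/(2·sinh(β)²·cosh(β))) where D = sqrt(x² - 4y²·cosh(β)³/(1+cosh(β))²), one has x', y' > 0 and x'/y' < (sinh(β)·(1+cosh(β))/cosh(β)³)·(x/y). -/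
/-!
With `K = c³/(1+c)²`, the numbers `(x ± D)/2` are the two roots of `t² - x t + K y²`, so
`(x + D)(x - D) = 4Ky²`. Hence `(x + D)/(x - D) = (x + D)²/(4Ky²)`, which turns `x'/y'` into the
exact value `s(1+c)/c³ · ((x + D)/2)/y`; the inequality is then just `(x + D)/2 < x`, i.e. `D < x`.
-/

open Real

lemma add_sqrt_mul_sub_sqrt {x q : ℝ} (hq : q ≤ x ^ 2) :
    (x + √(x ^ 2 - q)) * (x - √(x ^ 2 - q)) = q := by
  have hD := sq_sqrt (sub_nonneg.2 hq)
  linear_combination -hD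

lemma sqrt_sq_sub_lt_self {x q : ℝ} (hx : 0 < x) (hq : 0 < q) : √(x ^ 2 - q) < x :=
  (sqrt_lt' hx).2 (by linarith)

lemma sqrt_div_sqrt_eq_mul_larger_root {c s x y : ℝ} (hc : 0 < c) (hs : 0 < s) (hx : 0 < x)
    (hy : 0 < y) (hcond : 4 * y ^ 2 * c ^ 3 / (1 + c) ^ 2 ≤ x ^ 2) :
    let D := √(x ^ 2 - 4 * y ^ 2 * c ^ 3 / (1 + c) ^ 2)
    √((x + D) / (2 * c ^ 4)) / √((x - D) / (2 * s ^ 2 * c)) =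
      s * (1 + c) / c ^ 3 * ((x + D) / 2 / y) := by
  intro D
  have hDx : D < x := sqrt_sq_sub_lt_self hx (by positivity)
  have hvieta : (x + D) * (x - D) = 4 * y ^ 2 * c ^ 3 / (1 + c) ^ 2 :=
    add_sqrt_mul_sub_sqrt hcond
  have hD : 0 ≤ D := sqrt_nonneg _
  have hxD : 0 < x - D := by linarith
  rw [← sqrt_div' _ (by positivity), sqrt_eq_iff_eq_sq (by positivity) (by positivity)]
  field_simp
  field_simp at hvieta
  linear_combination -hvieta

theorem stmt_8 (β : ℝ) (hβ : 0 < β) (x y : ℝ) (hx : 0 < x) (hy : 0 < y)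
    (hcond : 2 * y * Real.sqrt (Real.cosh β ^ 3 / (1 + Real.cosh β) ^ 2) ≤ x) :
    let D := Real.sqrt (x ^ 2 - 4 * y ^ 2 * Real.cosh β ^ 3 / (1 + Real.cosh β) ^ 2)
    let x' := Real.sqrt ((x + D) / (2 * Real.cosh β ^ 4))
    let y' := Real.sqrt ((x - D) / (2 * Real.sinh β ^ 2 * Real.cosh β))
    0 < x' ∧ 0 < y' ∧
    x' / y' < (Real.sinh β * (1 + Real.cosh β) / Real.cosh β ^ 3) * (x / y) := by
  intro D x' y'
  have hc : 0 < cosh β := cosh_pos β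
  have hs : 0 < sinh β := sinh_pos_iff.2 hβ
  have hsq : 4 * y ^ 2 * cosh β ^ 3 / (1 + cosh β) ^ 2 ≤ x ^ 2 := by
    have h := pow_le_pow_left₀ (by positivity) hcond 2
    rw [mul_pow, sq_sqrt (by positivity), mul_pow, ← mul_div_assoc] at h
    linarith
  have hDx : D < x := sqrt_sq_sub_lt_self hx (by positivity)
  have hD : 0 ≤ D := sqrt_nonneg _
  have hxD : 0 < x - D := by linarith
  refine ⟨sqrt_pos.2 (by positivity), sqrt_pos.2 (by positivity), ?_⟩
  rw [show x' / y' = _ from sqrt_div_sqrt_eq_mul_larger_root hc hs hx hy hsq]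
  gcongr
  linarith
end
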